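/- Let 𝔊₄⁰⁰ be the 7-dimensional real Lie algebra with basis (X₁,X₂,X₃,X₄,X₅,X,Y) and nonzero brackets [X₁,X₂]=X₄, [X₁,X₃]=X₅, [X,X₁]=X₁, [X,X₄]=X₄, [X,X₅]=X₅, [Y,X₂]=X₂, [Y,X₄]=X₄. Let F ∈ (𝔊₄⁰⁰)* have coordinates (α₁,α₂,α₃,α₄,α₅,α,β) with α₄α₅ ≠ 0. Then Ω_F(𝔊₄⁰⁰) = { (x₁*,x₂*,x₃*,x₄*,x₅*,x*,y*) ∈ (𝔊₄⁰⁰)* : x₃* − x₂*x₅*/x₄* = (α₃α₄ − α₂α₅)/α₄, α₄x₄* > 0, α₅x₅* > 0 } (here x₁*, x₂*, x*, y* range over all of ℝ). -/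

import Mathlib

noncomputable section

/-- Half of the structure constants of the Lie algebra 𝔊₄⁰⁰ (indices `0,…,4` are
`X₁,…,X₅`, index `5` is `X`, index `6` is `Y`). -/
def g4half (i j : Fin 7) : Fin 7 → ℝ :=
  if i = 0 ∧ j = 1 then Pi.single 3 1      -- [X₁,X₂] = X₄
  else if i = 0 ∧ j = 2 then Pi.single 4 1 -- [X₁,X₃] = X₅
  else if i = 5 ∧ j = 0 then Pi.single 0 1 -- [X,X₁] = X₁
  else if i = 5 ∧ j = 3 then Pi.single 3 1 -- [X,X₄] = X₄
  else if i = 5 ∧ j = 4 then Pi.single 4 1 -- [X,X₅] = X₅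
  else if i = 6 ∧ j = 1 then Pi.single 1 1 -- [Y,X₂] = X₂
  else if i = 6 ∧ j = 3 then Pi.single 3 1 -- [Y,X₄] = X₄
  else 0

/-- The bracket `[Xᵢ, Xⱼ]` (in coordinates) of basis vectors of 𝔊₄⁰⁰. -/
def g4br (i j : Fin 7) : Fin 7 → ℝ := g4half i j - g4half j i

/-- The matrix (in the given basis) of the adjoint endomorphism `ad_U : T ↦ [U,T]`
of 𝔊₄⁰⁰, where `u` is the coordinate vector of `U`. -/
def adG4 (u : Fin 7 → ℝ) : Matrix (Fin 7) (Fin 7) ℝ :=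
  Matrix.of fun k j => ∑ i, u i * g4br i j k

/-- `Ω_F(𝔊₄⁰⁰) = {F_U : U ∈ 𝔊₄⁰⁰}` where `⟨F_U,T⟩ = ⟨F, exp(ad_U)(T)⟩`; in coordinates
(dual basis), `F_U = α ᵥ* exp(ad_U)` where `α` is the coordinate vector of `F`. -/
def OmegaG4 (α : Fin 7 → ℝ) : Set (Fin 7 → ℝ) :=
  {g | ∃ u : Fin 7 → ℝ, g = Matrix.vecMul α (NormedSpace.exp (adG4 u))}

open scoped Matrix

/-!
Along `t ↦ F_{tU}` the coordinates satisfy the linear ODE `φ' = φ · ad_U`, which is triangular: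
`x₄*` and `x₅*` are multiplied by `e^{t(u_X + u_Y)}` and `e^{t u_X}`, and so is `x₃*x₄* − x₂*x₅*`,
with the same rate as `x₄*`. This gives the two sign conditions and the invariance of the quadric.
Conversely, for `U = pX₁ + qX₃ + rX₄ + sX₅ + aX + bY` the ODE is solved in closed form; at `t = 1`
the parameters `a, b` fix `x₅*, x₄*`, then `q, p, s, r` fix `x₁*, x₂*, x*, y*` one at a time, and
`x₃*` is forced by the quadric.
-/

theorem eq_of_hasDerivAt_clm {E : Type*} [NormedAddCommGroup E] [NormedSpace ℝ E]
    (L : E →L[ℝ] E) {f g : ℝ → E} (hf : ∀ t, HasDerivAt f (L (f t)) t)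
    (hg : ∀ t, HasDerivAt g (L (g t)) t) (h0 : f 0 = g 0) : f = g :=
  ODE_solution_unique_univ (v := fun _ => L) (s := fun _ => Set.univ)
    (fun _ => L.lipschitz.lipschitzOnWith) (fun t => ⟨hf t, trivial⟩) (fun t => ⟨hg t, trivial⟩) h0

theorem hasDerivAt_exp_const_mul (c t : ℝ) :
    HasDerivAt (fun t => Real.exp (c * t)) (c * Real.exp (c * t)) t := by
  simpa [mul_comm] using ((hasDerivAt_id t).const_mul c).exp

theorem eq_exp_mul_of_hasDerivAt {f : ℝ → ℝ} {c : ℝ} (hf : ∀ t, HasDerivAt f (c * f t) t)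
    (t : ℝ) : f t = Real.exp (c * t) * f 0 := by
  refine congrFun (eq_of_hasDerivAt_clm (c • ContinuousLinearMap.id ℝ ℝ) (by simpa using hf)
    (g := fun t => Real.exp (c * t) * f 0) (fun t => ?_) (by simp)) t
  simpa [mul_assoc] using (hasDerivAt_exp_const_mul c t).mul_const (f 0)

theorem hasDerivAt_vecMul_exp_smul {n : Type*} [Fintype n] [DecidableEq n] (v : n → ℝ)
    (A : Matrix n n ℝ) (t : ℝ) :
    HasDerivAt (fun s : ℝ => v ᵥ* NormedSpace.exp (s • A))
      (v ᵥ* NormedSpace.exp (t • A) ᵥ* A) t := by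
  let _ := Matrix.linftyOpNormedRing (n := n) (α := ℝ)
  let _ := Matrix.linftyOpNormedAlgebra (n := n) (R := ℝ) (α := ℝ)
  let L : Matrix n n ℝ →L[ℝ] (n → ℝ) := LinearMap.toContinuousLinearMap
    { toFun := fun M => v ᵥ* M
      map_add' := fun M N => Matrix.vecMul_add M N v
      map_smul' := fun c M => Matrix.vecMul_smul v c M }
  rw [Matrix.vecMul_vecMul]
  exact L.hasFDerivAt.comp_hasDerivAt t (hasDerivAt_exp_smul_const A t)

theorem eq_vecMul_exp_smul_of_hasDerivAt {n : Type*} [Fintype n] [DecidableEq n]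
    {A : Matrix n n ℝ} {ψ : ℝ → n → ℝ} (hψ : ∀ t, HasDerivAt ψ (ψ t ᵥ* A) t) (t : ℝ) :
    ψ t = ψ 0 ᵥ* NormedSpace.exp (t • A) := by
  refine congrFun (eq_of_hasDerivAt_clm (LinearMap.toContinuousLinearMap A.vecMulLinear) hψ
    (hasDerivAt_vecMul_exp_smul (ψ 0) A) ?_) t
  simp

theorem vecMul_adG4 (v u : Fin 7 → ℝ) :
    v ᵥ* adG4 u = ![u 5 * v 0 - u 1 * v 3 - u 2 * v 4, u 6 * v 1 + u 0 * v 3, u 0 * v 4,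
      (u 5 + u 6) * v 3, u 5 * v 4, -(u 0 * v 0) - u 3 * v 3 - u 4 * v 4,
      -(u 1 * v 1) - u 3 * v 3] := by
  ext j
  fin_cases j <;>
    simp [Matrix.vecMul, dotProduct, adG4, g4br, g4half, Fin.sum_univ_seven, Pi.single_apply] <;>
    ring

def quadricG4 (α : Fin 7 → ℝ) : Set (Fin 7 → ℝ) :=
  {g | g 2 - g 1 * g 4 / g 3 = (α 2 * α 3 - α 1 * α 4) / α 3 ∧ α 3 * g 3 > 0 ∧ α 4 * g 4 > 0}

theorem omegaG4_subset_quadricG4 (α : Fin 7 → ℝ) (hα3 : α 3 ≠ 0) (hα4 : α 4 ≠ 0) :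
    OmegaG4 α ⊆ quadricG4 α := by
  rintro _ ⟨u, rfl⟩
  set φ : ℝ → Fin 7 → ℝ := fun s => α ᵥ* NormedSpace.exp (s • adG4 u)
  have hφ (i : Fin 7) (t : ℝ) : HasDerivAt (fun s => φ s i) ((φ t ᵥ* adG4 u) i) t :=
    hasDerivAt_pi.1 (hasDerivAt_vecMul_exp_smul α (adG4 u) t) i
  have h3 := eq_exp_mul_of_hasDerivAt (c := u 5 + u 6) (fun t => by
    simpa [vecMul_adG4] using hφ 3 t) 1
  have h4 := eq_exp_mul_of_hasDerivAt (c := u 5) (fun t => by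
    simpa [vecMul_adG4] using hφ 4 t) 1
  have hC := eq_exp_mul_of_hasDerivAt (f := fun t => φ t 2 * φ t 3 - φ t 1 * φ t 4)
    (c := u 5 + u 6) (fun t => (((hφ 2 t).mul (hφ 3 t)).sub ((hφ 1 t).mul (hφ 4 t))).congr_deriv
      (by simp only [vecMul_adG4, Matrix.cons_val, Matrix.cons_val_zero, Matrix.cons_val_one]
          ring)) 1
  simp only [φ, one_smul, zero_smul, NormedSpace.exp_zero, Matrix.vecMul_one, mul_one] at h3 h4 hC
  set g := α ᵥ* NormedSpace.exp (adG4 u)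
  have hg3 : g 3 ≠ 0 := by rw [h3]; positivity
  refine ⟨?_, ?_, ?_⟩
  · field_simp
    linear_combination α 3 * hC - (α 2 * α 3 - α 1 * α 4) * h3
  · rw [h3, mul_left_comm]; exact mul_pos (Real.exp_pos _) (mul_self_pos.2 hα3)
  · rw [h4, mul_left_comm]; exact mul_pos (Real.exp_pos _) (mul_self_pos.2 hα4)

/-- The curve `t ↦ F_{tU}` for `U = pX₁ + qX₃ + rX₄ + sX₅ + aX + bY`. -/
def orbitCurveG4 (α : Fin 7 → ℝ) (a b p q r s t : ℝ) : Fin 7 → ℝ :=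
  ![Real.exp (a * t) * (α 0 - q * α 4 * t),
    Real.exp (b * t) * (α 1 + p * α 3 * ∫ x in 0..t, Real.exp (a * x)),
    α 2 + p * α 4 * ∫ x in 0..t, Real.exp (a * x),
    α 3 * Real.exp ((a + b) * t),
    α 4 * Real.exp (a * t),
    α 5 - (p * α 0 + s * α 4) * (∫ x in 0..t, Real.exp (a * x))
      + p * q * α 4 * (∫ x in 0..t, x * Real.exp (a * x))
      - r * α 3 * ∫ x in 0..t, Real.exp ((a + b) * x),
    α 6 - r * α 3 * ∫ x in 0..t, Real.exp ((a + b) * x)]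

theorem orbitCurveG4_zero (α : Fin 7 → ℝ) (a b p q r s : ℝ) :
    orbitCurveG4 α a b p q r s 0 = α := by
  ext i; fin_cases i <;> simp [orbitCurveG4]

theorem hasDerivAt_orbitCurveG4 (α : Fin 7 → ℝ) (a b p q r s t : ℝ) :
    HasDerivAt (orbitCurveG4 α a b p q r s)
      (orbitCurveG4 α a b p q r s t ᵥ* adG4 ![p, 0, q, r, s, a, b]) t := by
  have hE := hasDerivAt_exp_const_mul
  have hI (c : ℝ) : HasDerivAt (fun t => ∫ x in 0..t, Real.exp (c * x)) (Real.exp (c * t)) t :=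
    ((by fun_prop : Continuous fun x => Real.exp (c * x)).integral_hasStrictDerivAt 0 t).hasDerivAt
  have hJ : HasDerivAt (fun t => ∫ x in 0..t, x * Real.exp (a * x)) (t * Real.exp (a * t)) t :=
    ((by fun_prop : Continuous fun x => x * Real.exp (a * x)).integral_hasStrictDerivAt
      0 t).hasDerivAt
  rw [hasDerivAt_pi, vecMul_adG4]
  intro i
  fin_cases i <;> simp only [orbitCurveG4, Fin.zero_eta, Fin.mk_one, Fin.reduceFinMk, Fin.isValue,
    Matrix.cons_val, Matrix.cons_val_zero, Matrix.cons_val_one]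
  · exact ((hE a t).fun_mul (((hasDerivAt_id' t).const_mul (q * α 4)).const_sub (α 0))).congr_deriv
      (by ring)
  · exact ((hE b t).fun_mul (((hI a).const_mul (p * α 3)).const_add (α 1))).congr_deriv
      (by rw [add_mul, Real.exp_add]; ring)
  · exact (((hI a).const_mul (p * α 4)).const_add (α 2)).congr_deriv (by ring)
  · exact ((hE (a + b) t).const_mul (α 3)).congr_deriv (by ring)
  · exact ((hE a t).const_mul (α 4)).congr_deriv (by ring)
  · exact (((((hI a).const_mul (p * α 0 + s * α 4)).const_sub (α 5)).add
      (hJ.const_mul (p * q * α 4))).sub ((hI (a + b)).const_mul (r * α 3))).congr_deriv (by ring)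
  · exact (((hI (a + b)).const_mul (r * α 3)).const_sub (α 6)).congr_deriv (by ring)

theorem vecMul_exp_adG4_eq_orbitCurveG4 (α : Fin 7 → ℝ) (a b p q r s : ℝ) :
    α ᵥ* NormedSpace.exp (adG4 ![p, 0, q, r, s, a, b]) = orbitCurveG4 α a b p q r s 1 := by
  rw [eq_vecMul_exp_smul_of_hasDerivAt (hasDerivAt_orbitCurveG4 α a b p q r s) 1,
    orbitCurveG4_zero, one_smul]

theorem integral_exp_mul_pos (c : ℝ) : 0 < ∫ x in (0 : ℝ)..1, Real.exp (c * x) :=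
  intervalIntegral.intervalIntegral_pos_of_pos
    ((by fun_prop : Continuous fun x => Real.exp (c * x)).intervalIntegrable 0 1)
    (fun _ => Real.exp_pos _) zero_lt_one

theorem quadricG4_subset_omegaG4 (α : Fin 7 → ℝ) (hα3 : α 3 ≠ 0) (hα4 : α 4 ≠ 0) :
    quadricG4 α ⊆ OmegaG4 α := by
  rintro g ⟨hq, h3, h4⟩
  have hg3 : g 3 ≠ 0 := by rintro h; simp [h] at h3
  have hg4 : g 4 ≠ 0 := by rintro h; simp [h] at h4
  obtain ⟨a, ha⟩ : ∃ a, Real.exp a = g 4 / α 4 :=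
    ⟨_, Real.exp_log (by rw [← mul_div_mul_left _ _ hα4]; exact div_pos h4 (mul_self_pos.2 hα4))⟩
  obtain ⟨c, hc⟩ : ∃ c, Real.exp c = g 3 / α 3 :=
    ⟨_, Real.exp_log (by rw [← mul_div_mul_left _ _ hα3]; exact div_pos h3 (mul_self_pos.2 hα3))⟩
  set P := ∫ x in (0 : ℝ)..1, Real.exp (a * x) with hP_def
  set Q := ∫ x in (0 : ℝ)..1, x * Real.exp (a * x) with hQ_def
  set R := ∫ x in (0 : ℝ)..1, Real.exp (c * x) with hR_def
  have hP : P ≠ 0 := (integral_exp_mul_pos a).ne'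
  have hR : R ≠ 0 := (integral_exp_mul_pos c).ne'
  obtain ⟨q, hq0⟩ : ∃ q, Real.exp a * (α 0 - q * α 4) = g 0 :=
    ⟨(α 0 - g 0 / Real.exp a) / α 4, by field_simp; ring⟩
  obtain ⟨p, hp1⟩ : ∃ p, Real.exp (c - a) * (α 1 + p * α 3 * P) = g 1 :=
    ⟨(g 1 / Real.exp (c - a) - α 1) / (α 3 * P), by field_simp; ring⟩
  obtain ⟨r, hr6⟩ : ∃ r, α 6 - r * α 3 * R = g 6 :=
    ⟨(α 6 - g 6) / (α 3 * R), by field_simp; ring⟩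
  obtain ⟨s, hs5⟩ : ∃ s, α 5 - (p * α 0 + s * α 4) * P + p * q * α 4 * Q - r * α 3 * R = g 5 :=
    ⟨(α 5 - p * α 0 * P + p * q * α 4 * Q - r * α 3 * R - g 5) / (α 4 * P), by field_simp; ring⟩
  have hp2 : α 2 + p * α 4 * P = g 2 := by
    rw [Real.exp_sub, ha, hc] at hp1
    field_simp at hp1 hq ⊢
    apply mul_left_cancel₀ (mul_ne_zero hα3 hg3)
    linear_combination hp1 - hq
  refine ⟨![p, 0, q, r, s, a, c - a], ?_⟩
  rw [vecMul_exp_adG4_eq_orbitCurveG4]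
  ext i
  fin_cases i
  · simpa [orbitCurveG4] using hq0.symm
  · simpa [orbitCurveG4, ← hP_def] using hp1.symm
  · simpa [orbitCurveG4, ← hP_def] using hp2.symm
  · simp [orbitCurveG4, hc, mul_div_cancel₀ _ hα3]
  · simp [orbitCurveG4, ha, mul_div_cancel₀ _ hα4]
  · simpa [orbitCurveG4, ← hP_def, ← hQ_def, ← hR_def] using hs5.symm
  · simpa [orbitCurveG4, ← hR_def] using hr6.symm

/-- If `F ∈ (𝔊₄⁰⁰)*` has coordinates `(α₁,…,α₅,α,β)` with `α₄α₅ ≠ 0`, then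
`Ω_F(𝔊₄⁰⁰) = {(x₁*,…,x₅*,x*,y*) : x₃* − x₂*x₅*/x₄* = (α₃α₄−α₂α₅)/α₄,
α₄x₄* > 0, α₅x₅* > 0}`. -/
theorem omega_G400_quadric (α : Fin 7 → ℝ) (h45 : α 3 * α 4 ≠ 0) :
    OmegaG4 α = {g : Fin 7 → ℝ |
      g 2 - g 1 * g 4 / g 3 = (α 2 * α 3 - α 1 * α 4) / α 3 ∧
      α 3 * g 3 > 0 ∧ α 4 * g 4 > 0} :=
  (omegaG4_subset_quadricG4 α (left_ne_zero_of_mul h45) (right_ne_zero_of_mul h45)).antisymm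
    (quadricG4_subset_omegaG4 α (left_ne_zero_of_mul h45) (right_ne_zero_of_mul h45))

end
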